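/- arXiv:2103.09398 — 4 statements merged into one kernel-verified Lean document; each statement's English description precedes it below -/
import Mathlib

section
/- If x* solves Ax* - |x*| - b = 0, then for all x ∈ ℝ^n, ⟨A(x - x*), e(x)⟩ ≥ (1/2)[‖e(x)‖² + ⟨x - x*, (AᵀA - I)(x - x*)⟩], where e(x) = Ax - |x| - b. -/
open Matrix
open scoped InnerProductSpace

def vecAbs {n : ℕ} (x : EuclideanSpace ℝ (Fin n)) : EuclideanSpace ℝ (Fin n) :=
  WithLp.toLp 2 (fun i => |x i|)

/-!
Write `v = x - x*` and `u = A v`. Since `x*` solves the equation, `e(x) = u - d` with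
`d = |x| - |x*|`, and the identity `2⟨u, u - d⟩ = ‖u - d‖² + ‖u‖² - ‖d‖²` reduces the claim to
`‖d‖ ≤ ‖v‖`, i.e. to the componentwise absolute value being 1-Lipschitz.
-/

theorem two_mul_inner_self_sub {E : Type*} [NormedAddCommGroup E] [InnerProductSpace ℝ E]
    (u d : E) : 2 * ⟪u, u - d⟫_ℝ = ‖u - d‖ ^ 2 + ‖u‖ ^ 2 - ‖d‖ ^ 2 := by
  rw [inner_sub_right, norm_sub_sq_real, real_inner_self_eq_norm_sq]
  ring

theorem le_inner_self_sub_of_norm_le {E : Type*} [NormedAddCommGroup E]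
    [InnerProductSpace ℝ E] (u d v : E) (hdv : ‖d‖ ≤ ‖v‖) :
    1 / 2 * (‖u - d‖ ^ 2 + (‖u‖ ^ 2 - ‖v‖ ^ 2)) ≤ ⟪u, u - d⟫_ℝ := by
  have hsq : ‖d‖ ^ 2 ≤ ‖v‖ ^ 2 := pow_le_pow_left₀ (norm_nonneg d) hdv 2
  linarith [two_mul_inner_self_sub u d]

theorem norm_vecAbs_sub_vecAbs_le {n : ℕ} (x y : EuclideanSpace ℝ (Fin n)) :
    ‖vecAbs x - vecAbs y‖ ≤ ‖x - y‖ := by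
  rw [EuclideanSpace.norm_eq, EuclideanSpace.norm_eq]
  gcongr with i
  simp only [vecAbs, PiLp.sub_apply, Real.norm_eq_abs]
  exact abs_abs_sub_abs_le_abs_sub (x i) (y i)

theorem dotProduct_transpose_mul_self_sub_one_mulVec {m n : Type*} [Fintype m] [Fintype n]
    [DecidableEq n] (A : Matrix m n ℝ) (v : EuclideanSpace ℝ n) :
    v ⬝ᵥ ((Aᵀ * A - 1) *ᵥ v) = ‖toEuclideanLin A v‖ ^ 2 - ‖v‖ ^ 2 := by
  rw [sub_mulVec, dotProduct_sub, one_mulVec, ← mulVec_mulVec, dotProduct_mulVec,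
    vecMul_transpose, ← real_inner_self_eq_norm_sq, ← real_inner_self_eq_norm_sq]
  rfl

/-- If `x*` solves `Ax* - |x*| - b = 0`, then for all `x`,
`⟨A(x - x*), e(x)⟩ ≥ (1/2)[‖e(x)‖² + ⟨x - x*, (AᵀA - I)(x - x*)⟩]`,
where `e(x) = Ax - |x| - b`. -/
theorem key_inequality (n : ℕ) (A : Matrix (Fin n) (Fin n) ℝ) (b : EuclideanSpace ℝ (Fin n))
    (xs : EuclideanSpace ℝ (Fin n))
    (hxs : Matrix.toEuclideanLin A xs - vecAbs xs - b = 0)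
    (x : EuclideanSpace ℝ (Fin n)) :
    let e : EuclideanSpace ℝ (Fin n) :=
      Matrix.toEuclideanLin A x - vecAbs x - b
    ⟪Matrix.toEuclideanLin A (x - xs), e⟫_ℝ ≥
      (1 / 2) * (‖e‖ ^ 2 + (x - xs) ⬝ᵥ ((Aᵀ * A - 1).mulVec (x - xs))) := by
  intro e
  have he : e = toEuclideanLin A (x - xs) - (vecAbs x - vecAbs xs) := by
    rw [map_sub, ← sub_eq_zero, ← hxs]
    simp only [e]
    abel
  -- the second `x - xs` of the statement elaborates as a difference of plain functions
  rw [← WithLp.ofLp_sub (x := x), dotProduct_transpose_mul_self_sub_one_mulVec, he]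
  exact le_inner_self_sub_of_norm_le _ _ _ (norm_vecAbs_sub_vecAbs_le x xs)
end

section
/- If there exists ν ∈ (0,1) with ‖I - νA‖ < 1 - ν, then the absolute value equation Ax - |x| = b has a unique solution for every b ∈ ℝ^n. -/
/-!
Solutions of `A x - |x| = b` are the fixed points of the relaxed map
`F x = x - ν (A x - |x| - b) = (1 - ν A) x + ν |x| + ν b`. Since `|·|` is 1-Lipschitz, `F` is
Lipschitz with constant `‖1 - ν A‖ + ν < 1`, so Banach's fixed point theorem gives exactly one
solution.
-/

open Matrix

/-- The operator 2-norm of a matrix. -/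
noncomputable def opNorm {n : ℕ} (A : Matrix (Fin n) (Fin n) ℝ) : ℝ :=
  ‖LinearMap.toContinuousLinearMap (Matrix.toEuclideanLin A)‖

open Function NNReal

theorem ContractingWith.existsUnique_isFixedPt {α : Type*} [MetricSpace α] [Nonempty α]
    [CompleteSpace α] {K : ℝ≥0} {f : α → α} (hf : ContractingWith K f) :
    ∃! x, IsFixedPt f x :=
  ⟨hf.fixedPoint f, hf.fixedPoint_isFixedPt, fun _ hx => hf.fixedPoint_unique hx⟩

theorem existsUnique_sub_eq_of_norm_one_sub_smul_add_lt {E : Type*} [NormedAddCommGroup E]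
    [NormedSpace ℝ E] [CompleteSpace E] (T : E →L[ℝ] E)
    {g : E → E} {K : ℝ≥0} (hg : LipschitzWith K g) {ν : ℝ} (hν : 0 < ν)
    (hlt : ‖1 - ν • T‖ + ν * K < 1) (b : E) :
    ∃! x, T x - g x = b := by
  set F : E → E := fun x => (1 - ν • T) x + ν • g x + ν • b
  have hF_lip : LipschitzWith (‖1 - ν • T‖₊ + ‖ν‖₊ * K + 0) F :=
    ((1 - ν • T).lipschitz.add ((lipschitzWith_smul ν).comp hg)).add (LipschitzWith.const _)
  have hF : ContractingWith (‖1 - ν • T‖₊ + ‖ν‖₊ * K + 0) F := by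
    refine ⟨?_, hF_lip⟩
    rw [← NNReal.coe_lt_coe]
    simpa [Real.norm_of_nonneg hν.le] using hlt
  have hF_fixed : ∀ x, IsFixedPt F x ↔ T x - g x = b := by
    intro x
    have hFx : F x = x - ν • (T x - g x - b) := by
      simp only [F, _root_.sub_apply, _root_.smul_apply, one_apply_eq_self]
      module
    rw [IsFixedPt, hFx, sub_eq_self, smul_eq_zero, or_iff_right hν.ne', sub_eq_zero]
  exact (existsUnique_congr hF_fixed).mp hF.existsUnique_isFixedPt

theorem lipschitzWith_one_vecAbs (n : ℕ) : LipschitzWith 1 (vecAbs (n := n)) := by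
  refine LipschitzWith.mk_one fun x y => ?_
  rw [EuclideanSpace.dist_eq, EuclideanSpace.dist_eq]
  gcongr with i
  exact abs_abs_sub_abs_le_abs_sub (x i) (y i)

theorem opNorm_eq_norm_toEuclideanCLM {n : ℕ} (A : Matrix (Fin n) (Fin n) ℝ) :
    opNorm A = ‖toEuclideanCLM (𝕜 := ℝ) A‖ :=
  rfl

/-- If there exists `ν ∈ (0,1)` with `‖I - νA‖ < 1 - ν`, then the AVE `Ax - |x| = b`
has a unique solution for every `b`. -/
theorem ave_unique_solution (n : ℕ) (A : Matrix (Fin n) (Fin n) ℝ)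
    (h : ∃ ν ∈ Set.Ioo (0 : ℝ) 1, opNorm (1 - ν • A) < 1 - ν) :
    ∀ b : EuclideanSpace ℝ (Fin n),
      ∃! x : EuclideanSpace ℝ (Fin n), Matrix.toEuclideanLin A x - vecAbs x = b := by
  obtain ⟨ν, ⟨hν, -⟩, hlt⟩ := h
  rw [opNorm_eq_norm_toEuclideanCLM, map_sub, map_one, map_smul] at hlt
  exact existsUnique_sub_eq_of_norm_one_sub_smul_add_lt _ (lipschitzWith_one_vecAbs n) hν
    (by push_cast; linarith)
end

section
/- If σ_min(A) > 1 and A - I is positive real (i.e., xᵀ(A - I)x > 0 for all nonzero x), then there exists ν ∈ (0,1) such that ‖I - νA‖ < 1 - ν. -/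
set_option maxHeartbeats 800000


open Matrix RealInnerProductSpace

/-- The smallest singular value of `A`, as the infimum of `‖Ax‖` over unit vectors. -/
noncomputable def sigmaMin {n : ℕ} (A : Matrix (Fin n) (Fin n) ℝ) : ℝ :=
  sInf {r : ℝ | ∃ x : EuclideanSpace ℝ (Fin n), ‖x‖ = 1 ∧ r = ‖Matrix.toEuclideanLin A x‖}

/-- If `σ_min(A) > 1` and `A - I` is positive real, then there exists `ν ∈ (0,1)` with
`‖I - νA‖ < 1 - ν`. -/
theorem exists_nu_of_sigmaMin_gt_one (n : ℕ) (A : Matrix (Fin n) (Fin n) ℝ)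
    (hσ : sigmaMin A > 1)
    (hpos : ∀ x : Fin n → ℝ, x ≠ 0 → 0 < x ⬝ᵥ ((A - 1).mulVec x)) :
    ∃ ν ∈ Set.Ioo (0 : ℝ) 1, opNorm (1 - ν • A) < 1 - ν := by
  classical
  rcases Nat.eq_zero_or_pos n with hn | hn
  · subst hn
    refine ⟨1/2, ⟨by norm_num, by norm_num⟩, ?_⟩
    haveI : Subsingleton (EuclideanSpace ℝ (Fin 0)) :=
      ⟨fun a b => by ext i; exact i.elim0⟩
    have h0 : LinearMap.toContinuousLinearMap
        (Matrix.toEuclideanLin (1 - (1/2 : ℝ) • A)) = 0 := by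
      apply ContinuousLinearMap.ext
      intro x
      exact Subsingleton.elim _ _
    rw [opNorm, h0, norm_zero]
    norm_num
  -- the continuous linear map associated to A
  set L : EuclideanSpace ℝ (Fin n) →L[ℝ] EuclideanSpace ℝ (Fin n) := LinearMap.toContinuousLinearMap (Matrix.toEuclideanLin A) with hL
  have hLapp : ∀ x : EuclideanSpace ℝ (Fin n), L x = Matrix.toEuclideanLin A x := fun x => rfl
  -- inner product vs dot product
  have hinner : ∀ x : EuclideanSpace ℝ (Fin n), ⟪x, L x⟫ =
      (WithLp.equiv 2 (Fin n → ℝ) x) ⬝ᵥ A.mulVec (WithLp.equiv 2 (Fin n → ℝ) x) := by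
    intro x
    simp [hLapp, Matrix.toEuclideanLin_apply, PiLp.inner_apply, dotProduct, mul_comm]
  have hself : ∀ x : EuclideanSpace ℝ (Fin n), ⟪x, x⟫ = ‖x‖ ^ 2 := fun x => real_inner_self_eq_norm_sq x
  -- strict positivity for nonzero x
  have hposE : ∀ x : EuclideanSpace ℝ (Fin n), x ≠ 0 → ‖x‖ ^ 2 < ⟪x, L x⟫ := by
    intro x hx
    have hx' : (WithLp.equiv 2 (Fin n → ℝ) x) ≠ 0 := by
      intro h
      apply hx
      have := congrArg (WithLp.equiv 2 (Fin n → ℝ)).symm h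
      simpa using this
    have h := hpos _ hx'
    rw [Matrix.sub_mulVec, Matrix.one_mulVec, dotProduct_sub] at h
    have hxx : (WithLp.equiv 2 (Fin n → ℝ) x) ⬝ᵥ (WithLp.equiv 2 (Fin n → ℝ) x) = ‖x‖ ^ 2 := by
      rw [← hself x, PiLp.inner_apply]
      simp [dotProduct, sq]
    rw [hxx] at h
    rw [hinner x]
    linarith
  -- the quadratic form is continuous
  have hcont : Continuous fun x : EuclideanSpace ℝ (Fin n) => ⟪x, L x⟫ :=
    continuous_id.inner L.continuous
  -- unit sphere is nonempty and compact
  have hne : (Metric.sphere (0 : EuclideanSpace ℝ (Fin n)) 1).Nonempty := by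
    refine ⟨EuclideanSpace.single ⟨0, hn⟩ (1 : ℝ), ?_⟩
    rw [mem_sphere_zero_iff_norm, EuclideanSpace.norm_single]
    norm_num
  obtain ⟨x₀, hx₀s, hmin⟩ :=
    (isCompact_sphere (0 : EuclideanSpace ℝ (Fin n)) 1).exists_isMinOn hne hcont.continuousOn
  have hx₀ : ‖x₀‖ = 1 := by simpa using hx₀s
  have hx₀ne : x₀ ≠ 0 := by
    intro h; rw [h] at hx₀; simp at hx₀
  set δ : ℝ := ⟪x₀, L x₀⟫ - 1 with hδ
  have hδpos : 0 < δ := by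
    have := hposE x₀ hx₀ne
    rw [hx₀] at this
    simp only [hδ]
    linarith
  set M : ℝ := ‖L‖ with hM
  have hMnn : 0 ≤ M := norm_nonneg _
  set ν : ℝ := min (1/2) (δ / (M ^ 2 + 1)) with hν
  have hM2 : (0 : ℝ) < M ^ 2 + 1 := by positivity
  have hνpos : 0 < ν := lt_min (by norm_num) (div_pos hδpos hM2)
  have hνhalf : ν ≤ 1/2 := min_le_left _ _
  have hνδ : ν * (M ^ 2 + 1) ≤ δ := by
    have : ν ≤ δ / (M ^ 2 + 1) := min_le_right _ _
    calc ν * (M ^ 2 + 1) ≤ (δ / (M ^ 2 + 1)) * (M ^ 2 + 1) := by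
          exact mul_le_mul_of_nonneg_right this (le_of_lt hM2)
      _ = δ := div_mul_cancel₀ _ (ne_of_gt hM2)
  -- coercivity : ⟪x, Lx⟫ ≥ (1+δ)‖x‖² for all x
  have hcoer : ∀ x : EuclideanSpace ℝ (Fin n), (1 + δ) * ‖x‖ ^ 2 ≤ ⟪x, L x⟫ := by
    intro x
    rcases eq_or_ne x 0 with rfl | hx
    · simp
    · set u : EuclideanSpace ℝ (Fin n) := ‖x‖⁻¹ • x with hu
      have hxn : (0 : ℝ) < ‖x‖ := norm_pos_iff.mpr hx
      have hun : ‖u‖ = 1 := by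
        rw [hu, norm_smul]
        simp [abs_of_pos (inv_pos.mpr hxn), inv_mul_cancel₀ (ne_of_gt hxn)]
      have husph : u ∈ Metric.sphere (0 : EuclideanSpace ℝ (Fin n)) 1 := by simp [hun]
      have hmin' : ⟪x₀, L x₀⟫ ≤ ⟪u, L u⟫ := hmin husph
      have hscale : ⟪u, L u⟫ = ‖x‖⁻¹ ^ 2 * ⟪x, L x⟫ := by
        rw [hu, real_inner_smul_left, L.map_smul, real_inner_smul_right]
        ring
      have h1δ : 1 + δ ≤ ‖x‖⁻¹ ^ 2 * ⟪x, L x⟫ := by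
        rw [← hscale]
        have : 1 + δ = ⟪x₀, L x₀⟫ := by rw [hδ]; ring
        rw [this]; exact hmin'
      have hx2 : (0 : ℝ) < ‖x‖ ^ 2 := by positivity
      calc (1 + δ) * ‖x‖ ^ 2 ≤ (‖x‖⁻¹ ^ 2 * ⟪x, L x⟫) * ‖x‖ ^ 2 :=
            mul_le_mul_of_nonneg_right h1δ (le_of_lt hx2)
        _ = ⟪x, L x⟫ := by
            field_simp
  -- The key bound on ‖x - ν • L x‖²
  set K : ℝ := 1 - 2 * ν * (1 + δ) + ν ^ 2 * M ^ 2 with hK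
  have hbound : ∀ x : EuclideanSpace ℝ (Fin n), ‖x - ν • L x‖ ^ 2 ≤ K * ‖x‖ ^ 2 := by
    intro x
    have hns : ‖x - ν • L x‖ ^ 2 = ‖x‖ ^ 2 - 2 * ⟪x, ν • L x⟫ + ‖ν • L x‖ ^ 2 := by
      rw [norm_sub_sq_real]
    have h1 : ⟪x, ν • L x⟫ = ν * ⟪x, L x⟫ := real_inner_smul_right _ _ _
    have h2 : ‖ν • L x‖ ^ 2 = ν ^ 2 * ‖L x‖ ^ 2 := by
      rw [norm_smul]
      rw [Real.norm_eq_abs, mul_pow, sq_abs]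
    have h3 : ‖L x‖ ≤ M * ‖x‖ := L.le_opNorm x
    have h4 : ‖L x‖ ^ 2 ≤ M ^ 2 * ‖x‖ ^ 2 := by
      have := mul_self_le_mul_self (norm_nonneg (L x)) h3
      calc ‖L x‖ ^ 2 = ‖L x‖ * ‖L x‖ := sq ‖L x‖
        _ ≤ (M * ‖x‖) * (M * ‖x‖) := this
        _ = M ^ 2 * ‖x‖ ^ 2 := by ring
    have h5 := hcoer x
    rw [hns, h1, h2, hK]
    nlinarith [sq_nonneg ν, sq_nonneg ‖x‖, hνpos]
  -- K ≥ 0 (from the unit vector x₀)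
  have hKnn : 0 ≤ K := by
    have := hbound x₀
    rw [hx₀] at this
    nlinarith [sq_nonneg ‖x₀ - ν • L x₀‖]
  -- K < (1-ν)²
  have hKlt : K < (1 - ν) ^ 2 := by
    have : ν * (M ^ 2 - 1) < 2 * δ := by nlinarith
    nlinarith
  -- identify T := toCLM (toEuclideanLin (1 - ν•A))
  have hTapp : ∀ x : EuclideanSpace ℝ (Fin n),
      LinearMap.toContinuousLinearMap (Matrix.toEuclideanLin (1 - ν • A)) x
        = x - ν • L x := by
    intro x
    have : Matrix.toEuclideanLin (1 - ν • A) x = x - ν • Matrix.toEuclideanLin A x := by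
      rw [map_sub, _root_.map_smul]
      simp only [LinearMap.sub_apply, LinearMap.smul_apply]
      congr 1
      simp [Matrix.toEuclideanLin_apply, Matrix.one_mulVec]
    simpa [hLapp] using this
  refine ⟨ν, ⟨hνpos, by linarith⟩, ?_⟩
  have h1ν : (0 : ℝ) < 1 - ν := by linarith
  have hle : opNorm (1 - ν • A) ≤ Real.sqrt K := by
    rw [opNorm]
    refine ContinuousLinearMap.opNorm_le_bound _ (Real.sqrt_nonneg K) (fun x => ?_)
    rw [hTapp x]
    have := hbound x
    have h6 : ‖x - ν • L x‖ = Real.sqrt (‖x - ν • L x‖ ^ 2) :=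
      (Real.sqrt_sq (norm_nonneg _)).symm
    rw [h6]
    calc Real.sqrt (‖x - ν • L x‖ ^ 2) ≤ Real.sqrt (K * ‖x‖ ^ 2) := Real.sqrt_le_sqrt this
      _ = Real.sqrt K * ‖x‖ := by
          rw [Real.sqrt_mul hKnn, Real.sqrt_sq (norm_nonneg _)]
  have hlt : Real.sqrt K < 1 - ν := (Real.sqrt_lt' h1ν).mpr hKlt
  linarith
end

section
/- There is no ν ∈ (0,1) such that ‖I - νA‖ < 1 - ν when A = diag(1.8, -2); in fact ‖I - νA‖ ≥ 1 + 2ν > 1 - ν for every ν ∈ (0,1). -/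
open Matrix

lemma opNorm_lower {n : ℕ} (M : Matrix (Fin n) (Fin n) ℝ) (x : EuclideanSpace ℝ (Fin n)) :
    ‖(LinearMap.toContinuousLinearMap (Matrix.toEuclideanLin M)) x‖ ≤ opNorm M * ‖x‖ :=
  ContinuousLinearMap.le_opNorm _ x

/-- For `A = diag(1.8, -2)`, for every `ν ∈ (0,1)` one has
`‖I - νA‖ ≥ 1 + 2ν > 1 - ν`; in particular there is no `ν ∈ (0,1)` with
`‖I - νA‖ < 1 - ν`. -/
theorem counterexample_diag (A : Matrix (Fin 2) (Fin 2) ℝ)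
    (hA : A = !![(1.8 : ℝ), 0; 0, -2]) :
    (∀ ν ∈ Set.Ioo (0 : ℝ) 1,
        opNorm (1 - ν • A) ≥ 1 + 2 * ν ∧ 1 + 2 * ν > 1 - ν) ∧
      ¬ ∃ ν ∈ Set.Ioo (0 : ℝ) 1, opNorm (1 - ν • A) < 1 - ν := by
  subst hA
  have key : ∀ ν ∈ Set.Ioo (0 : ℝ) 1,
      opNorm (1 - ν • !![(1.8 : ℝ), 0; 0, -2]) ≥ 1 + 2 * ν ∧ 1 + 2 * ν > 1 - ν := by
    intro ν hν
    obtain ⟨hν0, hν1⟩ := hν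
    refine ⟨?_, by linarith⟩
    have hM : (1 : Matrix (Fin 2) (Fin 2) ℝ) - ν • !![(1.8 : ℝ), 0; 0, -2]
        = !![1 - ν * 1.8, 0; 0, 1 + 2 * ν] := by
      ext i j
      fin_cases i <;> fin_cases j <;>
        simp [Matrix.one_apply] <;> ring
    rw [hM]
    set M : Matrix (Fin 2) (Fin 2) ℝ := !![1 - ν * 1.8, 0; 0, 1 + 2 * ν] with hMdef
    set x : EuclideanSpace ℝ (Fin 2) := EuclideanSpace.single (1 : Fin 2) (1 : ℝ) with hx
    have hxn : ‖x‖ = 1 := by simp [hx]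
    have himg : ‖(LinearMap.toContinuousLinearMap (Matrix.toEuclideanLin M)) x‖
        = 1 + 2 * ν := by
      have hval : ∀ i : Fin 2,
          (LinearMap.toContinuousLinearMap (Matrix.toEuclideanLin M)) x i
            = M.mulVec (fun j => if j = 1 then 1 else 0) i := by
        intro i
        rw [LinearMap.coe_toContinuousLinearMap', Matrix.toEuclideanLin_apply]
        show (M *ᵥ (WithLp.equiv 2 (Fin 2 → ℝ)) x) i = _
        congr 1
        ext j
        simp [hx, WithLp.equiv_apply, EuclideanSpace.single_apply]
      rw [EuclideanSpace.norm_eq, Fin.sum_univ_two, hval 0, hval 1]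
      have h0 : M.mulVec (fun j => if j = 1 then 1 else 0) 0 = 0 := by
        simp [hMdef, Matrix.mulVec, dotProduct, Fin.sum_univ_two]
      have h1 : M.mulVec (fun j => if j = 1 then 1 else 0) 1 = 1 + 2 * ν := by
        simp [hMdef, Matrix.mulVec, dotProduct, Fin.sum_univ_two]
      rw [h0, h1, norm_zero, Real.norm_eq_abs, abs_of_nonneg (by linarith)]
      rw [show (0:ℝ) ^ 2 + (1 + 2 * ν) ^ 2 = (1 + 2 * ν) ^ 2 by ring]
      exact Real.sqrt_sq (by linarith)
    have h := opNorm_lower M x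
    rw [himg, hxn, mul_one] at h
    exact h
  refine ⟨key, ?_⟩
  rintro ⟨ν, hν, hlt⟩
  obtain ⟨hge, hgt⟩ := key ν hν
  linarith
end
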